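/- Let ω₁, ω₂, ω₃ ∈ [2, 4] and β ∈ [−1, 1] be fixed. Then the function h(α) = ∂²/∂α² det M(ω, α, β) (the second derivative in α of the determinant of M(ω, α, β)) is convex in α on [−1, 1], and h(α) ≥ h(0) for all α ∈ [−1, 1]. -/

import Mathlib

/-!
As a function of `α`, `det M(ω, α, β)` is an even polynomial `a + b α² + c α⁴ + d α⁶`, so its
second derivative is `2b + 12c α² + 30d α⁴`. This is convex and minimal at `α = 0` as soon as
`c, d ≥ 0`. Here `d = ¾ ω₁ω₃`, and `c = ⅜ (g(ω₁, ω₃, ω₂) + β² g(ω₃, ω₁, ω₂))` with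
`g(x, y, z) = 12y + 2xz − x²y`, which is nonnegative on `[2, 4]³`.
-/

open Matrix

/-- The `3 × 3` symmetric matrix `M(ω, α, β)`. -/
noncomputable def Mmat (ω₁ ω₂ ω₃ α β : ℝ) : Matrix (Fin 3) (Fin 3) ℝ :=
  !![3 + 1 / 2 * ω₁ * α ^ 2 + 1 / 2 * ω₂ * β ^ 2, ω₁ * α, ω₂ * β;
     ω₁ * α, 1 / 2 * ω₁ + 3 * α ^ 2 + 1 / 2 * ω₃ * β ^ 2, ω₃ * α * β;
     ω₂ * β, ω₃ * α * β, 1 / 2 * ω₂ + 1 / 2 * ω₃ * α ^ 2 + 3 * β ^ 2]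

open Polynomial

theorem Polynomial.iteratedDeriv_eval {𝕜 : Type*} [NontriviallyNormedField 𝕜] (n : ℕ)
    (p : 𝕜[X]) : iteratedDeriv n (fun x => p.eval x) = fun x => (derivative^[n] p).eval x := by
  induction n generalizing p with
  | zero => simp
  | succ n ih =>
    have hderiv : deriv (fun x => p.eval x) = fun x => (derivative p).eval x := by
      ext x
      exact p.deriv
    rw [iteratedDeriv_succ', hderiv, ih, Function.iterate_succ_apply]

theorem iteratedDeriv_two_even_sextic {𝕜 : Type*} [NontriviallyNormedField 𝕜] (a b c d : 𝕜) :
    iteratedDeriv 2 (fun x : 𝕜 => a + b * x ^ 2 + c * x ^ 4 + d * x ^ 6)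
      = fun x => 2 * b + 12 * c * x ^ 2 + 30 * d * x ^ 4 := by
  have h := Polynomial.iteratedDeriv_eval 2 (C a + C b * X ^ 2 + C c * X ^ 4 + C d * X ^ 6)
  simp only [eval_add, eval_mul, eval_C, eval_pow, eval_X] at h
  rw [h]
  ext x
  simp
  ring

theorem convexOn_even_quartic (a c d : ℝ) (hc : 0 ≤ c) (hd : 0 ≤ d) :
    ConvexOn ℝ Set.univ (fun x : ℝ => a + c * x ^ 2 + d * x ^ 4) := by
  have h2 : ConvexOn ℝ Set.univ (fun x : ℝ => c * x ^ 2) := (Even.convexOn_pow even_two).smul hc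
  have h4 : ConvexOn ℝ Set.univ (fun x : ℝ => d * x ^ 4) :=
    (Even.convexOn_pow (by decide : Even 4)).smul hd
  exact ((convexOn_const a convex_univ).add h2).add h4

theorem isMinOn_even_quartic (a c d : ℝ) (hc : 0 ≤ c) (hd : 0 ≤ d) :
    IsMinOn (fun x : ℝ => a + c * x ^ 2 + d * x ^ 4) Set.univ 0 := fun x _ => by
  have : 0 ≤ c * x ^ 2 + d * x ^ 4 := by positivity
  norm_num
  linarith

theorem sq_mul_le_twelve_mul_add_two_mul {x y z : ℝ} (hx₀ : 0 ≤ x) (hx₄ : x ≤ 4)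
    (hy₀ : 0 ≤ y) (hy₄ : y ≤ 4) (hz : 2 ≤ z) : x ^ 2 * y ≤ 12 * y + 2 * x * z := by
  have key : 12 * y + 2 * x * z - x ^ 2 * y
      = 2 * x * (z - 2) + x * (4 - y) + y * (4 - x) * (3 + x) := by ring
  have := sub_nonneg.2 hz
  have := sub_nonneg.2 hy₄
  have := sub_nonneg.2 hx₄
  rw [← sub_nonneg, key]
  positivity

theorem exists_det_Mmat_eq (ω₁ ω₂ ω₃ β : ℝ) : ∃ a b : ℝ, (fun α => (Mmat ω₁ ω₂ ω₃ α β).det)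
    = fun α => a + b * α ^ 2
      + 3 / 8 * ((12 * ω₃ + 2 * ω₁ * ω₂ - ω₁ ^ 2 * ω₃)
        + β ^ 2 * (12 * ω₁ + 2 * ω₃ * ω₂ - ω₃ ^ 2 * ω₁)) * α ^ 4
      + 3 / 4 * ω₁ * ω₃ * α ^ 6 := by
  refine ⟨9/2*ω₃*β^4 + 3/4*ω₂*ω₃*β^2 + 3/4*ω₂*ω₃*β^6 - 3/8*ω₂^2*ω₃*β^4
      + 9/2*ω₁*β^2 + 3/4*ω₁*ω₂ + 3/4*ω₁*ω₂*β^4 - 3/8*ω₁*ω₂^2*β^2,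
    27*β^2 - 9/4*ω₃^2*β^2 + 9/2*ω₂ + 9/2*ω₂*β^4 - 3/8*ω₂*ω₃^2*β^4
      - 9/4*ω₂^2*β^2 + 3/4*ω₁*ω₃ + 3/4*ω₁*ω₃*β^4 + 9/4*ω₁*ω₂*ω₃*β^2
      - 9/4*ω₁^2*β^2 - 3/8*ω₁^2*ω₂, ?_⟩
  ext α
  simp [Mmat, det_fin_three]
  ring

theorem second_deriv_det_M_convex_min_at_zero_general (ω₁ ω₂ ω₃ β : ℝ)
    (h₁ : ω₁ ∈ Set.Icc (2 : ℝ) 4) (h₂ : ω₂ ∈ Set.Icc (2 : ℝ) 4)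
    (h₃ : ω₃ ∈ Set.Icc (2 : ℝ) 4) :
    ConvexOn ℝ (Set.Icc (-1 : ℝ) 1)
      (iteratedDeriv 2 (fun α : ℝ => (Mmat ω₁ ω₂ ω₃ α β).det)) ∧
    ∀ α ∈ Set.Icc (-1 : ℝ) 1,
      iteratedDeriv 2 (fun α : ℝ => (Mmat ω₁ ω₂ ω₃ α β).det) 0
        ≤ iteratedDeriv 2 (fun α : ℝ => (Mmat ω₁ ω₂ ω₃ α β).det) α := by
  obtain ⟨h₁l, h₁u⟩ := h₁
  obtain ⟨h₃l, h₃u⟩ := h₃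
  obtain ⟨a, b, hdet⟩ := exists_det_Mmat_eq ω₁ ω₂ ω₃ β
  have hc : 0 ≤ 3 / 8 * ((12 * ω₃ + 2 * ω₁ * ω₂ - ω₁ ^ 2 * ω₃)
      + β ^ 2 * (12 * ω₁ + 2 * ω₃ * ω₂ - ω₃ ^ 2 * ω₁)) := by
    have h₁₃ := sq_mul_le_twelve_mul_add_two_mul (by linarith) h₁u (by linarith) h₃u h₂.1
    have h₃₁ := sq_mul_le_twelve_mul_add_two_mul (by linarith) h₃u (by linarith) h₁u h₂.1
    have := sub_nonneg.2 h₁₃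
    have := sub_nonneg.2 h₃₁
    positivity
  have hd : 0 ≤ 30 * (3 / 4 * ω₁ * ω₃) := by positivity
  rw [hdet, iteratedDeriv_two_even_sextic]
  exact ⟨(convexOn_even_quartic _ _ _ (by positivity) hd).subset (Set.subset_univ _)
    (convex_Icc _ _), fun α _ => isMinOn_even_quartic _ _ _ (by positivity) hd (Set.mem_univ α)⟩

/-- For fixed `ω₁, ω₂, ω₃ ∈ [2, 4]` and `β ∈ [−1, 1]`, the second derivative
in `α` of `det M(ω, α, β)` is convex in `α` on `[−1, 1]` and is minimized at `α = 0`: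
`h(α) ≥ h(0)` for all `α ∈ [−1, 1]`. -/
theorem second_deriv_det_M_convex_min_at_zero (ω₁ ω₂ ω₃ β : ℝ)
    (h₁ : ω₁ ∈ Set.Icc (2 : ℝ) 4) (h₂ : ω₂ ∈ Set.Icc (2 : ℝ) 4)
    (h₃ : ω₃ ∈ Set.Icc (2 : ℝ) 4) (hβ : β ∈ Set.Icc (-1 : ℝ) 1) :
    ConvexOn ℝ (Set.Icc (-1 : ℝ) 1)
      (iteratedDeriv 2 (fun α : ℝ => (Mmat ω₁ ω₂ ω₃ α β).det)) ∧
    ∀ α ∈ Set.Icc (-1 : ℝ) 1,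
      iteratedDeriv 2 (fun α : ℝ => (Mmat ω₁ ω₂ ω₃ α β).det) 0
        ≤ iteratedDeriv 2 (fun α : ℝ => (Mmat ω₁ ω₂ ω₃ α β).det) α :=
  second_deriv_det_M_convex_min_at_zero_general ω₁ ω₂ ω₃ β h₁ h₂ h₃
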